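/- arXiv:2307.09473 — 2 statements merged into one kernel-verified Lean document; each statement's English description precedes it below -/
import Mathlib

section
/- Let G be a graph and let a, b be vertices lying in a common connected component of G but in no common biconnected component, with BC-tree path B_a, c_1, B_1, c_2, ..., c_k, B_k, c_{k+1}, B_b between the blocks B_a ∋ a and B_b ∋ b. Then for each i ∈ [k], the graph G + {a,b} contains a path Q from c_i to c_{i+1} such that V(Q) ∩ V(B_i) = {c_i, c_{i+1}}; moreover, if G + {a,b} is planar, then G[V(B_i)] + {c_i, c_{i+1}} is planar. -/
open SimpleGraph

/-- The graph `G` with the edge `{a,b}` inserted. -/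
def addEdge {W : Type*} (G : SimpleGraph W) (a b : W) : SimpleGraph W :=
  G ⊔ SimpleGraph.fromEdgeSet {s(a, b)}

/-- `u` and `v` are joined by a walk all of whose vertices lie in `A`,
i.e. they are connected in the subgraph induced on `A`. -/
def ReachableWithin {W : Type*} (G : SimpleGraph W) (A : Set W) (u v : W) : Prop :=
  ∃ p : G.Walk u v, ∀ x ∈ p.support, x ∈ A

/-- The subgraph of `G` induced on the vertex set `A` is connected. -/
def ConnectedOn {W : Type*} (G : SimpleGraph W) (A : Set W) : Prop :=
  A.Nonempty ∧ ∀ ⦃u⦄, u ∈ A → ∀ ⦃v⦄, v ∈ A → ReachableWithin G A u v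

/-- The subgraph of `G` induced on `A` is biconnected: connected and without cut vertices. -/
def BiconnectedOn {W : Type*} (G : SimpleGraph W) (A : Set W) : Prop :=
  ConnectedOn G A ∧ ∀ w ∈ A, (A \ {w}).Nonempty → ConnectedOn G (A \ {w})

/-- `B` is (the vertex set of) a block of `G`: a maximal biconnected subgraph. -/
def IsBlock {W : Type*} (G : SimpleGraph W) (B : Set W) : Prop :=
  BiconnectedOn G B ∧ ∀ B' : Set W, B ⊆ B' → BiconnectedOn G B' → B' = B

/-- The subgraph of `G` induced on `A` is `k`-connected: it has more than `k` vertices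
and remains connected after deleting any fewer than `k` vertices. -/
def KConnectedOn {W : Type*} (k : ℕ) (G : SimpleGraph W) (A : Set W) : Prop :=
  (∃ f : Fin (k + 1) → W, Function.Injective f ∧ ∀ i, f i ∈ A) ∧
  ∀ S : Set W, S.Finite → S.ncard < k → ConnectedOn G (A \ S)

/-- `G` is `k`-connected. -/
def KConnected {W : Type*} (k : ℕ) (G : SimpleGraph W) : Prop :=
  KConnectedOn k G Set.univ

/-- Two walks with common endpoints are internally vertex-disjoint: they share no
vertices other than the endpoints. -/
def IntDisjoint {W : Type*} (G : SimpleGraph W) {s t : W} (p q : G.Walk s t) : Prop :=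
  ∀ x, x ∈ p.support → x ∈ q.support → x = s ∨ x = t

/-- The subgraph of `G` induced on the vertex set `A` (with edges only inside `A`),
as a graph on the ambient vertex type. -/
def inducedOn {W : Type*} (G : SimpleGraph W) (A : Set W) : SimpleGraph W :=
  SimpleGraph.fromRel (fun u v => u ∈ A ∧ v ∈ A ∧ G.Adj u v)

/-- A planar drawing of the part of the graph `G` induced on the vertex set `A`:
vertices are distinct points of the plane and edges are arcs that meet
only at shared endpoints. -/
structure PlanarDrawingOn {W : Type*} (G : SimpleGraph W) (A : Set W) where
  pos : W → ℝ × ℝ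
  pos_inj : Set.InjOn pos A
  arc : Sym2 W → Set (ℝ × ℝ)
  arc_spec : ∀ ⦃u v : W⦄, u ∈ A → v ∈ A → G.Adj u v →
    ∃ f : ℝ → ℝ × ℝ, ContinuousOn f (Set.Icc 0 1) ∧ Set.InjOn f (Set.Icc 0 1) ∧
      f 0 = pos u ∧ f 1 = pos v ∧ f '' Set.Icc 0 1 = arc s(u, v)
  arc_inter : ∀ ⦃e₁ e₂ : Sym2 W⦄, e₁ ∈ G.edgeSet → e₂ ∈ G.edgeSet →
    (∀ x ∈ e₁, x ∈ A) → (∀ x ∈ e₂, x ∈ A) → e₁ ≠ e₂ →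
    arc e₁ ∩ arc e₂ ⊆ {p : ℝ × ℝ | ∃ v ∈ A, v ∈ e₁ ∧ v ∈ e₂ ∧ p = pos v}
  pos_arc : ∀ ⦃e : Sym2 W⦄, e ∈ G.edgeSet → (∀ x ∈ e, x ∈ A) →
    ∀ v ∈ A, pos v ∈ arc e → v ∈ e

namespace PlanarDrawingOn

variable {W : Type*} {G : SimpleGraph W} {A : Set W}

/-- The set of points of the plane used by the drawing. -/
def image (D : PlanarDrawingOn G A) : Set (ℝ × ℝ) :=
  D.pos '' A ∪ ⋃ e ∈ {e : Sym2 W | e ∈ G.edgeSet ∧ ∀ x ∈ e, x ∈ A}, D.arc e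

/-- A face of a drawing: a connected component of the complement of the drawing. -/
def IsFace (D : PlanarDrawingOn G A) (F : Set (ℝ × ℝ)) : Prop :=
  ∃ x ∈ D.imageᶜ, F = connectedComponentIn D.imageᶜ x

/-- The outer face of a drawing is its unbounded face. -/
def IsOuterFace (D : PlanarDrawingOn G A) (F : Set (ℝ × ℝ)) : Prop :=
  D.IsFace F ∧ ¬ Bornology.IsBounded F

end PlanarDrawingOn

/-- A graph is planar if it admits a planar drawing. -/
def SimpleGraph.IsPlanar {W : Type*} (G : SimpleGraph W) : Prop :=
  Nonempty (PlanarDrawingOn G Set.univ)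

/-- All vertices of `S` lie on the boundary of a common face in a planar embedding of
the part of `G` induced on `A`. -/
def OnCommonFace {W : Type*} (G : SimpleGraph W) (A : Set W) (S : Set W) : Prop :=
  ∃ (D : PlanarDrawingOn G A) (F : Set (ℝ × ℝ)),
    D.IsFace F ∧ ∀ v ∈ S, D.pos v ∈ frontier F

/-- `w` is a cut vertex of `G`: its deletion disconnects two vertices that were connected. -/
def IsCutVertex {W : Type*} (G : SimpleGraph W) (w : W) : Prop :=
  ∃ u v : W, u ≠ w ∧ v ≠ w ∧ G.Reachable u v ∧ ¬ ReachableWithin G {w}ᶜ u v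

/-- The path `B_a, c_1, B_1, …, B_k, c_(k+1), B_b` in the BC-tree of the connected
component containing `a` and `b`, between the blocks `Bl 0 ∋ a` and `Bl (k+1) ∋ b`;
`c i` is the `i`-th cut vertex on the path, belonging to the blocks `Bl i` and `Bl (i+1)`. -/
structure BCPath {W : Type*} (G : SimpleGraph W) (a b : W) (k : ℕ) where
  Bl : Fin (k + 2) → Set W
  c : Fin (k + 1) → W
  isBlock : ∀ i, IsBlock G (Bl i)
  isCut : ∀ i, IsCutVertex G (c i)
  ha : a ∈ Bl 0
  hb : b ∈ Bl (Fin.last (k + 1))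
  linkL : ∀ i : Fin (k + 1), c i ∈ Bl i.castSucc
  linkR : ∀ i : Fin (k + 1), c i ∈ Bl i.succ
  Bl_inj : Function.Injective Bl
  c_inj : Function.Injective c

/-!
Two blocks of the BC-tree path meet only if they are consecutive, and then only in their common
cut vertex: otherwise the blocks between them form a cycle of biconnected sets, whose union is
again biconnected, contradicting the maximality of blocks. Hence the walk from `c_i` back to `a`
through the blocks before `B_i`, across the new edge `ab`, and from `b` to `c_(i+1)` through the
blocks after `B_i` meets `B_i` only in `c_i` and `c_(i+1)`; shortening it gives `Q`. For
planarity, draw the edge `c_i c_(i+1)` along the drawing of `Q`, keep the drawing of `G[V(B_i)]`,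
and move every other vertex, now isolated, far away.
-/

open Set

section Connectivity

variable {V : Type*} {G : SimpleGraph V} {A B U : Set V} {u v w : V}

theorem ReachableWithin.mono (hAU : A ⊆ U) (h : ReachableWithin G A u v) :
    ReachableWithin G U u v :=
  let ⟨p, hp⟩ := h
  ⟨p, fun x hx => hAU (hp x hx)⟩

theorem ReachableWithin.symm (h : ReachableWithin G A u v) : ReachableWithin G A v u :=
  let ⟨p, hp⟩ := h
  ⟨p.reverse, fun x hx => hp x (by simpa using hx)⟩

theorem ReachableWithin.trans (h₁ : ReachableWithin G A u v) (h₂ : ReachableWithin G A v w) :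
    ReachableWithin G A u w :=
  let ⟨p, hp⟩ := h₁
  let ⟨q, hq⟩ := h₂
  ⟨p.append q, fun x hx => (p.mem_support_append_iff q).mp hx |>.elim (hp x) (hq x)⟩

theorem ConnectedOn.union (hA : ConnectedOn G A) (hB : ConnectedOn G B)
    (hAB : (A ∩ B).Nonempty) : ConnectedOn G (A ∪ B) := by
  obtain ⟨y, hyA, hyB⟩ := hAB
  have toY : ∀ x ∈ A ∪ B, ReachableWithin G (A ∪ B) x y := by
    rintro x (hx | hx)
    · exact (hA.2 hx hyA).mono subset_union_left
    · exact (hB.2 hx hyB).mono subset_union_right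
  exact ⟨hA.1.mono subset_union_left, fun x hx z hz => (toY x hx).trans (toY z hz).symm⟩

theorem connectedOn_biUnion_Icc {D : ℕ → Set V} {p q : ℕ} (hpq : p ≤ q)
    (hD : ∀ t ∈ Icc p q, ConnectedOn G (D t))
    (hlink : ∀ t ∈ Ico p q, (D t ∩ D (t + 1)).Nonempty) :
    ConnectedOn G (⋃ t ∈ Icc p q, D t) := by
  induction q, hpq using Nat.le_induction with
  | base => simpa using hD p (by simp)
  | succ q hpq ih =>
    have hIcc : Icc p (q + 1) = insert (q + 1) (Icc p q) := by ext; simp; omega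
    rw [hIcc, biUnion_insert, union_comm]
    refine (ih (fun t ht => hD t ⟨ht.1, ht.2.trans q.le_succ⟩)
      (fun t ht => hlink t ⟨ht.1, ht.2.trans q.lt_succ_self⟩)).union
      (hD (q + 1) ⟨by omega, le_rfl⟩) ?_
    obtain ⟨y, hyq, hyq'⟩ := hlink q ⟨hpq, by omega⟩
    exact ⟨y, mem_biUnion (x := q) ⟨hpq, le_rfl⟩ hyq, hyq'⟩

theorem BiconnectedOn.connectedOn_diff_singleton {C : Set V} (hC : BiconnectedOn G C)
    (hnontriv : C.Nontrivial) (w : V) : ConnectedOn G (C \ {w}) := by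
  by_cases hw : w ∈ C
  · obtain ⟨y, hy, hyw⟩ := hnontriv.exists_ne w
    exact hC.2 w hw ⟨y, hy, hyw⟩
  · rw [sdiff_singleton_eq_self hw]
    exact hC.1

theorem biconnectedOn_biUnion_Icc_of_cycle {C : ℕ → Set V} {g : ℕ → V} {x : V} {p q : ℕ}
    (hpq : p < q) (hC : ∀ t ∈ Icc p q, BiconnectedOn G (C t))
    (hg : ∀ t ∈ Ico p q, g t ∈ C t ∩ C (t + 1)) (hg_inj : InjOn g (Ico p q))
    (hxp : x ∈ C p) (hxq : x ∈ C q) (hxg : ∀ t ∈ Ico p q, g t ≠ x) :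
    BiconnectedOn G (⋃ t ∈ Icc p q, C t) := by
  refine ⟨connectedOn_biUnion_Icc hpq.le (fun t ht => (hC t ht).1)
    (fun t ht => ⟨g t, hg t ht⟩), fun w _ _ => ?_⟩
  have hnontriv : ∀ t ∈ Icc p q, (C t).Nontrivial := by
    rintro t ⟨hpt, htq⟩
    obtain rfl | hpt := hpt.eq_or_lt
    · exact ⟨x, hxp, g p, (hg p ⟨le_rfl, hpq⟩).1, (hxg p ⟨le_rfl, hpq⟩).symm⟩
    have hprev : g (t - 1) ∈ C t := by
      simpa [Nat.sub_add_cancel (by omega : 1 ≤ t)] using (hg (t - 1) ⟨by omega, by omega⟩).2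
    obtain rfl | htq := htq.eq_or_lt
    · exact ⟨x, hxq, g (t - 1), hprev, (hxg (t - 1) ⟨by omega, by omega⟩).symm⟩
    · refine ⟨g (t - 1), hprev, g t, (hg t ⟨hpt.le, htq⟩).1, fun h => ?_⟩
      have := hg_inj ⟨by omega, by omega⟩ ⟨hpt.le, htq⟩ h
      omega
  have hD : ∀ t ∈ Icc p q, ConnectedOn G (C t \ {w}) := fun t ht =>
    (hC t ht).connectedOn_diff_singleton (hnontriv t ht) w
  have hlink : ∀ t ∈ Ico p q, g t ≠ w → g t ∈ (C t \ {w}) ∩ (C (t + 1) \ {w}) :=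
    fun t ht hgt => ⟨⟨(hg t ht).1, hgt⟩, ⟨(hg t ht).2, hgt⟩⟩
  simp only [iUnion_sdiff]
  by_cases hw : ∃ t₀ ∈ Ico p q, g t₀ = w
  · -- deleting `g t₀` cuts the chain at `t₀`, and `x` reconnects the two halves
    obtain ⟨t₀, ht₀, rfl⟩ := hw
    obtain ⟨hpt₀, ht₀q⟩ := ht₀
    have hsplit : Icc p q = Icc p t₀ ∪ Icc (t₀ + 1) q := by
      ext; simp only [mem_Icc, mem_union]; omega
    have hgt : ∀ t ∈ Ico p q, t ≠ t₀ → g t ≠ g t₀ := fun t ht hne h =>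
      hne (hg_inj ht ⟨hpt₀, ht₀q⟩ h)
    have hx : x ≠ g t₀ := (hxg t₀ ⟨hpt₀, ht₀q⟩).symm
    rw [hsplit, biUnion_union]
    refine (connectedOn_biUnion_Icc hpt₀ (fun t ⟨h₁, h₂⟩ => hD t ⟨h₁, by omega⟩)
      (fun t ⟨h₁, h₂⟩ => ⟨g t, hlink t ⟨h₁, by omega⟩ (hgt t ⟨h₁, by omega⟩ (by omega))⟩)).union
      (connectedOn_biUnion_Icc (by omega) (fun t ⟨h₁, h₂⟩ => hD t ⟨by omega, h₂⟩)
      (fun t ⟨h₁, h₂⟩ => ⟨g t, hlink t ⟨by omega, h₂⟩ (hgt t ⟨by omega, h₂⟩ (by omega))⟩))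
      ⟨x, mem_biUnion (x := p) ⟨le_rfl, hpt₀⟩ ⟨hxp, hx⟩,
        mem_biUnion (x := q) ⟨by omega, le_rfl⟩ ⟨hxq, hx⟩⟩
  · push Not at hw
    exact connectedOn_biUnion_Icc hpq.le hD fun t ht => ⟨g t, hlink t ht (hw t ht)⟩

theorem exists_isPath_addEdge_of_reachableWithin {L R : Set V} {a b : V} (hab : a ≠ b)
    (hL : ReachableWithin G L u a) (hR : ReachableWithin G R b v) :
    ∃ Q : (addEdge G a b).Walk u v, Q.IsPath ∧ ∀ x ∈ Q.support, x ∈ L ∪ R := by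
  classical
  obtain ⟨p₁, hp₁⟩ := hL
  obtain ⟨p₂, hp₂⟩ := hR
  have hadj : (addEdge G a b).Adj a b := Or.inr ⟨rfl, hab⟩
  have hle : G ≤ addEdge G a b := le_sup_left
  let W : (addEdge G a b).Walk u v := (p₁.mapLe hle).append (.cons hadj (p₂.mapLe hle))
  refine ⟨W.bypass, W.bypass_isPath, fun x hx => ?_⟩
  rcases (Walk.mem_support_append_iff _ _).mp (W.support_bypass_subset_support hx) with hx | hx
  · rw [Walk.support_mapLe_eq_support] at hx
    exact Or.inl (hp₁ x hx)
  rw [Walk.support_cons, List.mem_cons, Walk.support_mapLe_eq_support] at hx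
  rcases hx with rfl | hx
  · exact Or.inl (hp₁ x p₁.end_mem_support)
  · exact Or.inr (hp₂ x hx)

theorem IsBlock.eq_of_subset_of_biconnectedOn (hA : IsBlock G A) (hB : IsBlock G B)
    (hAU : A ⊆ U) (hBU : B ⊆ U) (hU : BiconnectedOn G U) : A = B := by
  have hUA : U = A := hA.2 U hAU hU
  exact hB.2 A (hUA ▸ hBU) hA.1

end Connectivity

section BlockChain

variable {V : Type*} {G : SimpleGraph V}

structure IsBlockChain (G : SimpleGraph V) (K : ℕ) (Bl : ℕ → Set V) (c : ℕ → V) : Prop where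
  isBlock : ∀ t ≤ K + 1, IsBlock G (Bl t)
  mem_left : ∀ t ≤ K, c t ∈ Bl t
  mem_right : ∀ t ≤ K, c t ∈ Bl (t + 1)
  injOn_block : InjOn Bl (Iic (K + 1))
  injOn_cut : InjOn c (Iic K)

namespace IsBlockChain

variable {K : ℕ} {Bl : ℕ → Set V} {c : ℕ → V}

theorem eq_succ_and_eq_of_mem (hc : IsBlockChain G K Bl c) {j l : ℕ} {x : V} (hjl : j < l)
    (hl : l ≤ K + 1) (hxj : x ∈ Bl j) (hxl : x ∈ Bl l) : l = j + 1 ∧ x = c j := by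
  induction hd : l - j using Nat.strong_induction_on generalizing j l with
  | _ d ih =>
  by_contra hne
  -- by minimality of `l - j`, `x` is none of the linking vertices from `Bl j` to `Bl l`
  have hxc : ∀ t ∈ Ico j l, c t ≠ x := by
    rintro t ⟨hjt, htl⟩ rfl
    obtain rfl | hjt := hjt.eq_or_lt
    · have hl' : j + 1 < l := by
        by_contra h
        exact hne ⟨by omega, rfl⟩
      have := ih (l - (j + 1)) (by omega) hl' hl (hc.mem_right j (by omega)) hxl rfl
      have := hc.injOn_cut (by simp; omega) (by simp; omega) this.2
      omega
    · have := ih (t - j) (by omega) hjt (by omega) hxj (hc.mem_left t (by omega)) rfl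
      have := hc.injOn_cut (by simp; omega) (by simp; omega) this.2
      omega
  have hcycle : BiconnectedOn G (⋃ t ∈ Icc j l, Bl t) :=
    biconnectedOn_biUnion_Icc_of_cycle hjl (fun t ht => (hc.isBlock t (ht.2.trans hl)).1)
      (fun t ht => ⟨hc.mem_left t (by have := ht.2; omega),
        hc.mem_right t (by have := ht.2; omega)⟩)
      (hc.injOn_cut.mono fun t ht => by simp at ht ⊢; omega) hxj hxl hxc
  have hjl' := (hc.isBlock j (by omega)).eq_of_subset_of_biconnectedOn (hc.isBlock l hl)
    (subset_biUnion_of_mem (u := Bl) (show j ∈ Icc j l from ⟨le_rfl, hjl.le⟩))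
    (subset_biUnion_of_mem (u := Bl) (show l ∈ Icc j l from ⟨hjl.le, le_rfl⟩)) hcycle
  have := hc.injOn_block (by simp; omega) (by simp; omega) hjl'
  omega

theorem connectedOn_biUnion (hc : IsBlockChain G K Bl c) {p q : ℕ} (hpq : p ≤ q)
    (hq : q ≤ K + 1) : ConnectedOn G (⋃ t ∈ Icc p q, Bl t) :=
  connectedOn_biUnion_Icc hpq (fun t ht => (hc.isBlock t (ht.2.trans hq)).1.1)
    (fun t ht => ⟨c t, hc.mem_left t (by have := ht.2; omega),
      hc.mem_right t (by have := ht.2; omega)⟩)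

theorem exists_isPath_addEdge (hc : IsBlockChain G K Bl c) {a b : V} (ha : a ∈ Bl 0)
    (hb : b ∈ Bl (K + 1)) {i : ℕ} (hi : i + 1 ≤ K) :
    ∃ Q : (addEdge G a b).Walk (c i) (c (i + 1)), Q.IsPath ∧
      {x | x ∈ Q.support} ∩ Bl (i + 1) = {c i, c (i + 1)} := by
  have hab : a ≠ b := fun h =>
    absurd (hc.eq_succ_and_eq_of_mem (Nat.succ_pos K) le_rfl ha (h ▸ hb)).1 (by omega)
  obtain ⟨Q, hQ, hQLR⟩ := exists_isPath_addEdge_of_reachableWithin hab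
    ((hc.connectedOn_biUnion (Nat.zero_le i) (by omega)).2
      (mem_biUnion (x := i) ⟨Nat.zero_le i, le_rfl⟩ (hc.mem_left i (by omega)))
      (mem_biUnion (x := 0) ⟨le_rfl, Nat.zero_le i⟩ ha))
    ((hc.connectedOn_biUnion (p := i + 2) (by omega) le_rfl).2
      (mem_biUnion (x := K + 1) ⟨by omega, le_rfl⟩ hb)
      (mem_biUnion (x := i + 2) ⟨le_rfl, by omega⟩ (hc.mem_right (i + 1) hi)))
  refine ⟨Q, hQ, subset_antisymm ?_ ?_⟩
  · rintro x ⟨hxQ, hxB⟩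
    rcases hQLR x hxQ with hx | hx
    · obtain ⟨t, ht, hxt⟩ := mem_iUnion₂.mp hx
      have := hc.eq_succ_and_eq_of_mem (by simp at ht; omega) (by omega) hxt hxB
      exact Or.inl (by simpa [show t = i by omega] using this.2)
    · obtain ⟨t, ht, hxt⟩ := mem_iUnion₂.mp hx
      exact Or.inr (hc.eq_succ_and_eq_of_mem (by simp at ht; omega) ht.2 hxB hxt).2
  · rintro x (rfl | rfl)
    · exact ⟨Q.start_mem_support, hc.mem_right i (by omega)⟩
    · exact ⟨Q.end_mem_support, hc.mem_left (i + 1) hi⟩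

end IsBlockChain

end BlockChain

namespace BCPath

variable {V : Type*} {G : SimpleGraph V} {a b : V} {k : ℕ} (bc : BCPath G a b k)

def block (t : ℕ) : Set V := if h : t < k + 2 then bc.Bl ⟨t, h⟩ else ∅

def cut (t : ℕ) : V := if h : t < k + 1 then bc.c ⟨t, h⟩ else a

theorem block_val (j : Fin (k + 2)) : bc.block j = bc.Bl j := by simp [block]

theorem cut_val (j : Fin (k + 1)) : bc.cut j = bc.c j := by simp [cut, j.isLt]

theorem left_mem_block : a ∈ bc.block 0 := bc.block_val 0 ▸ bc.ha

theorem right_mem_block : b ∈ bc.block (k + 1) := bc.block_val (Fin.last _) ▸ bc.hb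

theorem isBlockChain : IsBlockChain G k bc.block bc.cut where
  isBlock t ht := by simpa [← bc.block_val ⟨t, by omega⟩] using bc.isBlock ⟨t, by omega⟩
  mem_left t ht := by
    simpa [← bc.block_val, ← bc.cut_val ⟨t, by omega⟩] using bc.linkL ⟨t, by omega⟩
  mem_right t ht := by
    simpa [← bc.block_val, ← bc.cut_val ⟨t, by omega⟩] using bc.linkR ⟨t, by omega⟩
  injOn_block s hs t ht h := by
    have := bc.Bl_inj (a₁ := ⟨s, by simp at hs; omega⟩) (a₂ := ⟨t, by simp at ht; omega⟩)
      (by simpa [← block_val] using h)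
    simpa using this
  injOn_cut s hs t ht h := by
    have := bc.c_inj (a₁ := ⟨s, by simp at hs; omega⟩) (a₂ := ⟨t, by simp at ht; omega⟩)
      (by simpa [← cut_val] using h)
    simpa using this

end BCPath

section Arc

variable {X : Type*} [TopologicalSpace X] {S T : Set X} {x y z : X}

def IsArcBetween (S : Set X) (x y : X) : Prop :=
  ∃ γ : Path x y, Function.Injective γ ∧ range γ = S

theorem isArcBetween_iff : IsArcBetween S x y ↔ ∃ f : ℝ → X, ContinuousOn f (Icc 0 1) ∧
    InjOn f (Icc 0 1) ∧ f 0 = x ∧ f 1 = y ∧ f '' Icc 0 1 = S := by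
  constructor
  · rintro ⟨γ, hinj, rfl⟩
    refine ⟨γ.extend, γ.continuous_extend.continuousOn, fun s hs t ht h => ?_, γ.extend_zero,
      γ.extend_one, ?_⟩
    · rw [γ.extend_apply hs, γ.extend_apply ht] at h
      exact congrArg Subtype.val (hinj h)
    · exact γ.image_extend_of_subset subset_rfl
  · rintro ⟨f, hcont, hinj, h0, h1, rfl⟩
    refine ⟨⟨⟨(Icc 0 1).domRestrict f, hcont.domRestrict⟩, by simpa [domRestrict] using h0,
      by simpa [domRestrict] using h1⟩,
      fun s t h => Subtype.ext (hinj s.2 t.2 h), (image_eq_range f _).symm⟩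

theorem IsArcBetween.symm (h : IsArcBetween S x y) : IsArcBetween S y x := by
  obtain ⟨γ, hinj, rfl⟩ := h
  exact ⟨γ.symm, hinj.comp unitInterval.symm_bijective.injective, γ.symm_range⟩

theorem IsArcBetween.trans (h₁ : IsArcBetween S x y) (h₂ : IsArcBetween T y z)
    (hST : S ∩ T ⊆ {y}) : IsArcBetween (S ∪ T) x z := by
  obtain ⟨γ₁, hinj₁, rfl⟩ := h₁
  obtain ⟨γ₂, hinj₂, rfl⟩ := h₂
  refine ⟨γ₁.trans γ₂, ?_, γ₁.trans_range γ₂⟩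
  -- the two halves can only meet at `y = γ₁ 1 = γ₂ 0`
  have hmeet : ∀ s t, γ₁ s = γ₂ t → (s : ℝ) = 1 ∧ (t : ℝ) = 0 := fun s t h =>
    have hy : γ₁ s = y := hST ⟨⟨s, rfl⟩, ⟨t, h.symm⟩⟩
    ⟨congrArg Subtype.val (hinj₁ (hy.trans γ₁.target.symm)),
      congrArg Subtype.val (hinj₂ ((h.symm.trans hy).trans γ₂.source.symm))⟩
  intro s t hst
  simp only [Path.trans_apply] at hst
  split_ifs at hst with hs ht ht
  · have := congrArg Subtype.val (hinj₁ hst)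
    simp only at this
    exact Subtype.ext (by linarith)
  · have := hmeet _ _ hst
    simp only at this
    linarith
  · have := hmeet _ _ hst.symm
    simp only at this
    linarith
  · have := congrArg Subtype.val (hinj₂ hst)
    simp only at this
    exact Subtype.ext (by linarith)

end Arc

section Drawing

variable {V : Type*} {G H : SimpleGraph V} {A B : Set V} {a b c c' u v : V}

theorem Sym2.eq_of_not_isDiag_of_forall_mem {α : Type*} {z z' : Sym2 α} (hz : ¬z.IsDiag)
    (h : ∀ x ∈ z, x ∈ z') : z = z' := by
  induction z using Sym2.ind with
  | h x y =>
    exact Sym2.eq_of_ne_mem (Sym2.mk_isDiag_iff.not.mp hz) (Sym2.mem_mk_left x y)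
      (Sym2.mem_mk_right x y) (h x (Sym2.mem_mk_left x y)) (h y (Sym2.mem_mk_right x y))

theorem addEdge_adj : (addEdge G a b).Adj u v ↔ G.Adj u v ∨ (s(u, v) = s(a, b) ∧ u ≠ v) := by
  simp [addEdge]

theorem inducedOn_adj : (inducedOn G A).Adj u v ↔ u ∈ A ∧ v ∈ A ∧ G.Adj u v := by
  simp only [inducedOn, fromRel_adj]
  constructor
  · rintro ⟨-, h | ⟨hv, hu, h⟩⟩
    exacts [h, ⟨hu, hv, h.symm⟩]
  · exact fun h => ⟨h.2.2.ne, Or.inl h⟩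

theorem inducedOn_le : inducedOn G A ≤ G := fun _ _ h => (inducedOn_adj.mp h).2.2

theorem inducedOn_mono (h : G ≤ H) : inducedOn G A ≤ inducedOn H A := fun _ _ huv =>
  let ⟨hu, hv, huv⟩ := inducedOn_adj.mp huv
  inducedOn_adj.mpr ⟨hu, hv, h huv⟩

theorem addEdge_mono (h : G ≤ H) : addEdge G a b ≤ addEdge H a b := sup_le_sup_right h _

theorem mem_edgeSet_of_mem_edgeSet_addEdge_inducedOn {e : Sym2 V}
    (he : e ∈ (addEdge (inducedOn G B) c c').edgeSet) (hne : e ≠ s(c, c')) : e ∈ G.edgeSet := by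
  rw [addEdge, edgeSet_sup, edgeSet_fromEdgeSet] at he
  rcases he with he | ⟨rfl, -⟩
  · exact edgeSet_mono inducedOn_le he
  · exact absurd rfl hne

theorem forall_mem_of_mem_edgeSet (hGA : ∀ ⦃u v⦄, G.Adj u v → u ∈ A) {e : Sym2 V}
    (he : e ∈ G.edgeSet) : ∀ x ∈ e, x ∈ A := by
  induction e using Sym2.ind with
  | h u v =>
    intro x hx
    rcases Sym2.mem_iff.mp hx with rfl | rfl
    exacts [hGA he, hGA he.symm]

namespace PlanarDrawingOn

def ofLE (h : G ≤ H) (D : PlanarDrawingOn H A) : PlanarDrawingOn G A where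
  pos := D.pos
  pos_inj := D.pos_inj
  arc := D.arc
  arc_spec _ _ hu hv huv := D.arc_spec hu hv (h huv)
  arc_inter _ _ he₁ he₂ := D.arc_inter (edgeSet_mono h he₁) (edgeSet_mono h he₂)
  pos_arc _ he := D.pos_arc (edgeSet_mono h he)

theorem isBounded_image [Finite V] (D : PlanarDrawingOn G A) : Bornology.IsBounded D.image := by
  refine ((toFinite A).image D.pos).isBounded.union
    ((Bornology.isBounded_biUnion (toFinite _)).mpr fun e => ?_)
  induction e using Sym2.ind with
  | h u v =>
    rintro ⟨he, heA⟩
    obtain ⟨f, hf, -, -, -, hfe⟩ :=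
      D.arc_spec (heA u (Sym2.mem_mk_left u v)) (heA v (Sym2.mem_mk_right u v)) he
    exact hfe ▸ (isCompact_Icc.image_of_continuousOn hf).isBounded

theorem isPlanar [Finite V] (D : PlanarDrawingOn G A) (hGA : ∀ ⦃u v⦄, G.Adj u v → u ∈ A) :
    G.IsPlanar := by
  classical
  obtain ⟨R, hR⟩ := isBounded_iff_forall_norm_le.mp D.isBounded_image
  obtain ⟨ι, hι⟩ := exists_injective_nat V
  -- the remaining vertices are isolated: put them on the `x`-axis, beyond the drawing
  let far : V → ℝ × ℝ := fun v => (R + 1 + ι v, 0)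
  have hfar : ∀ v, R < ‖far v‖ := fun v =>
    calc R < R + 1 + ι v := by linarith [(ι v).cast_nonneg (α := ℝ)]
      _ ≤ ‖(far v).1‖ := le_abs_self _
      _ ≤ ‖far v‖ := norm_fst_le _
  have hpos : ∀ v ∈ A, ‖D.pos v‖ ≤ R := fun v hv => hR _ (Or.inl (mem_image_of_mem _ hv))
  have hedge : ∀ e ∈ G.edgeSet, ∀ x ∈ e, x ∈ A := fun _ => forall_mem_of_mem_edgeSet hGA
  have harc : ∀ e ∈ G.edgeSet, ∀ z ∈ D.arc e, ‖z‖ ≤ R := fun e he z hz =>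
    hR z (Or.inr (mem_biUnion (x := e) ⟨he, hedge e he⟩ hz))
  refine ⟨{ pos := fun v => if v ∈ A then D.pos v else far v, pos_inj := ?_, arc := D.arc,
            arc_spec := ?_, arc_inter := ?_, pos_arc := ?_ }⟩
  · intro u _ v _ h
    beta_reduce at h
    split_ifs at h with hu hv hv
    · exact D.pos_inj hu hv h
    · exact absurd (h ▸ hpos u hu) (hfar v).not_ge
    · exact absurd (h ▸ hpos v hv) (hfar u).not_ge
    · exact hι (by simpa [far] using h)
  · intro u v _ _ huv
    have hu := hGA huv
    have hv := hGA huv.symm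
    simpa [hu, hv] using D.arc_spec hu hv huv
  · intro e₁ e₂ he₁ he₂ _ _ hne z hz
    obtain ⟨w, hw, hwe₁, hwe₂, rfl⟩ :=
      D.arc_inter he₁ he₂ (hedge e₁ he₁) (hedge e₂ he₂) hne hz
    exact ⟨w, trivial, hwe₁, hwe₂, by simp [hw]⟩
  · intro e he _ v _ hv
    split_ifs at hv with hvA
    · exact D.pos_arc he (hedge e he) v hvA hv
    · exact absurd (harc e he _ hv) (hfar v).not_ge

theorem exists_mem_support_of_mem_arc_inter (D : PlanarDrawingOn G A) {p : G.Walk u v}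
    (hpA : ∀ x ∈ p.support, x ∈ A) {e : Sym2 V} (he : e ∈ G.edgeSet) (heA : ∀ x ∈ e, x ∈ A)
    (hep : e ∉ p.edges) {z : ℝ × ℝ} (hz : z ∈ D.arc e ∩ ⋃ e' ∈ p.edges, D.arc e') :
    ∃ w ∈ e, w ∈ p.support ∧ z = D.pos w := by
  obtain ⟨e', he', hze'⟩ := mem_iUnion₂.mp hz.2
  obtain ⟨w, -, hwe, hwe', rfl⟩ := D.arc_inter he (p.edges_subset_edgeSet he') heA
    (fun x hx => hpA x (Walk.mem_support_of_mem_edges he' hx)) (fun h => hep (h ▸ he'))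
    ⟨hz.1, hze'⟩
  exact ⟨w, hwe, Walk.mem_support_of_mem_edges he' hwe', rfl⟩

theorem isArcBetween_biUnion_arc (D : PlanarDrawingOn G A) {p : G.Walk u v} (hp : p.IsPath)
    (hpA : ∀ x ∈ p.support, x ∈ A) (huv : u ≠ v) :
    IsArcBetween (⋃ e ∈ p.edges, D.arc e) (D.pos u) (D.pos v) := by
  induction p with
  | nil => exact absurd rfl huv
  | @cons u u' v h q ih =>
    obtain ⟨hq, hu⟩ := (Walk.cons_isPath_iff h q).mp hp
    have hqA : ∀ x ∈ q.support, x ∈ A := fun x hx => hpA x (by simp [hx])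
    have hedge : IsArcBetween (D.arc s(u, u')) (D.pos u) (D.pos u') :=
      isArcBetween_iff.mpr (D.arc_spec (hpA u (by simp)) (hqA u' q.start_mem_support) h)
    simp only [Walk.edges_cons, List.mem_cons, iUnion_iUnion_eq_or_left]
    by_cases hu'v : u' = v
    · subst hu'v
      obtain rfl := (Walk.isPath_iff_nil.mp hq).eq_nil
      simpa using hedge
    refine hedge.trans (ih hq hqA hu'v) fun z hz => ?_
    obtain ⟨w, hw, hwq, rfl⟩ := D.exists_mem_support_of_mem_arc_inter hqA (G.mem_edgeSet.mpr h)
      (fun x hx => by rcases Sym2.mem_iff.mp hx with rfl | rfl <;> simp_all)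
      (fun he => hu (Walk.mem_support_of_mem_edges he (Sym2.mem_mk_left u u'))) hz
    rcases Sym2.mem_iff.mp hw with rfl | rfl
    · exact absurd hwq hu
    · rfl

theorem nonempty_addEdge_inducedOn (D : PlanarDrawingOn H univ) (hcc' : c ≠ c')
    {Q : H.Walk c c'} (hQ : Q.IsPath) (hQB : {x | x ∈ Q.support} ∩ B ⊆ {c, c'}) :
    Nonempty (PlanarDrawingOn (addEdge (inducedOn H B) c c') B) := by
  classical
  set γ := ⋃ e ∈ Q.edges, D.arc e
  have hγ : IsArcBetween γ (D.pos c) (D.pos c') :=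
    D.isArcBetween_biUnion_arc hQ (fun _ _ => trivial) hcc'
  have hQB' : ∀ x ∈ Q.support, x ∈ B → x ∈ s(c, c') := fun x hx hxB => by
    simpa using hQB ⟨hx, hxB⟩
  -- an edge inside `B` other than `cc'` is not on `Q`, so its arc meets `γ` only at `c` or `c'`
  have hmeet : ∀ e ∈ H.edgeSet, (∀ x ∈ e, x ∈ B) → e ≠ s(c, c') →
      ∀ z ∈ D.arc e ∩ γ, ∃ w ∈ B, w ∈ e ∧ w ∈ s(c, c') ∧ z = D.pos w := by
    intro e he heB hne z hz
    have heQ : e ∉ Q.edges := fun heQ =>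
      hne (Sym2.eq_of_not_isDiag_of_forall_mem (H.not_isDiag_of_mem_edgeSet he) fun w hw =>
        hQB' w (Walk.mem_support_of_mem_edges heQ hw) (heB w hw))
    obtain ⟨w, hwe, hwQ, rfl⟩ :=
      D.exists_mem_support_of_mem_arc_inter (fun _ _ => trivial) he (fun _ _ => trivial) heQ hz
    exact ⟨w, heB w hwe, hwe, hQB' w hwQ (heB w hwe), rfl⟩
  have hedge {e} (he : e ∈ (addEdge (inducedOn H B) c c').edgeSet) (hne : e ≠ s(c, c')) :=
    mem_edgeSet_of_mem_edgeSet_addEdge_inducedOn he hne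
  refine ⟨{ pos := D.pos, pos_inj := D.pos_inj.mono (subset_univ B),
            arc := fun e => if e = s(c, c') then γ else D.arc e,
            arc_spec := ?_, arc_inter := ?_, pos_arc := ?_ }⟩
  · intro u v _ _ huv
    rw [← isArcBetween_iff]
    split_ifs with he
    · rcases Sym2.eq_iff.mp he with ⟨rfl, rfl⟩ | ⟨rfl, rfl⟩
      exacts [hγ, hγ.symm]
    · exact isArcBetween_iff.mpr (D.arc_spec trivial trivial (hedge huv he))
  · intro e₁ e₂ he₁ he₂ hB₁ hB₂ hne z ⟨hz₁, hz₂⟩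
    split_ifs at hz₁ hz₂ with h₁ h₂ h₂
    · exact absurd (h₁.trans h₂.symm) hne
    · obtain ⟨w, hwB, hwe, hwc, rfl⟩ := hmeet e₂ (hedge he₂ h₂) hB₂ h₂ z ⟨hz₂, hz₁⟩
      exact ⟨w, hwB, h₁ ▸ hwc, hwe, rfl⟩
    · obtain ⟨w, hwB, hwe, hwc, rfl⟩ := hmeet e₁ (hedge he₁ h₁) hB₁ h₁ z ⟨hz₁, hz₂⟩
      exact ⟨w, hwB, hwe, h₂ ▸ hwc, rfl⟩
    · obtain ⟨w, -, hw⟩ := D.arc_inter (hedge he₁ h₁) (hedge he₂ h₂)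
        (fun _ _ => trivial) (fun _ _ => trivial) hne ⟨hz₁, hz₂⟩
      exact ⟨w, hB₁ w hw.1, hw⟩
  · intro e he _ v hv hpos
    split_ifs at hpos with h
    · obtain ⟨e', he', hve'⟩ := mem_iUnion₂.mp hpos
      have hvQ := Walk.mem_support_of_mem_edges he'
        (D.pos_arc (Q.edges_subset_edgeSet he') (fun _ _ => trivial) v trivial hve')
      exact h ▸ hQB' v hvQ hv
    · exact D.pos_arc (hedge he h) (fun _ _ => trivial) v trivial hpos

end PlanarDrawingOn

theorem SimpleGraph.IsPlanar.mono (h : G ≤ H) (hH : H.IsPlanar) : G.IsPlanar :=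
  hH.map (PlanarDrawingOn.ofLE h)

theorem SimpleGraph.IsPlanar.addEdge_inducedOn_of_isPath [Finite V] (hH : H.IsPlanar)
    (hGH : G ≤ H) (hc : c ∈ B) (hc' : c' ∈ B) (hcc' : c ≠ c') {Q : H.Walk c c'}
    (hQ : Q.IsPath) (hQB : {x | x ∈ Q.support} ∩ B ⊆ {c, c'}) :
    (addEdge (inducedOn G B) c c').IsPlanar := by
  obtain ⟨D⟩ := hH
  obtain ⟨D'⟩ := D.nonempty_addEdge_inducedOn hcc' hQ hQB
  refine (D'.isPlanar fun u v huv => ?_).mono (addEdge_mono (inducedOn_mono hGH))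
  rcases addEdge_adj.mp huv with h | ⟨h, -⟩
  · exact (inducedOn_adj.mp h).1
  · rcases Sym2.eq_iff.mp h with ⟨rfl, -⟩ | ⟨rfl, -⟩
    exacts [hc, hc']

end Drawing

theorem stmt8_general {V : Type*} [Fintype V] (G : SimpleGraph V)
    (a b : V)
    (k : ℕ) (bc : BCPath G a b k) (i : Fin k) :
    (∃ Q : (addEdge G a b).Walk (bc.c i.castSucc) (bc.c i.succ),
       Q.IsPath ∧
       {x : V | x ∈ Q.support} ∩ bc.Bl i.succ.castSucc =
         {bc.c i.castSucc, bc.c i.succ}) ∧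
    ((addEdge G a b).IsPlanar →
      (addEdge (inducedOn G (bc.Bl i.succ.castSucc))
        (bc.c i.castSucc) (bc.c i.succ)).IsPlanar) := by
  have hi : (i : ℕ) + 1 ≤ k := i.isLt
  have hchain := bc.isBlockChain
  rw [← bc.cut_val i.castSucc, ← bc.cut_val i.succ, ← bc.block_val i.succ.castSucc]
  simp only [Fin.val_castSucc, Fin.val_succ]
  obtain ⟨Q, hQ, hQB⟩ := hchain.exists_isPath_addEdge bc.left_mem_block bc.right_mem_block hi
  have hne : bc.cut i ≠ bc.cut (i + 1) := fun h =>
    absurd (hchain.injOn_cut (by simp) (by simp [hi]) h) (by omega)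
  exact ⟨⟨Q, hQ, hQB⟩, fun hH => hH.addEdge_inducedOn_of_isPath le_sup_left
    (hchain.mem_right i (by omega)) (hchain.mem_left (i + 1) hi) hne hQ hQB.subset⟩

/-- For each block `B_i` on the BC-tree path between `a` and `b`,
the graph `G + {a,b}` contains a path `Q` from `c_i` to `c_(i+1)` meeting `B_i`
exactly in `{c_i, c_(i+1)}`; moreover if `G + {a,b}` is planar then
`G[V(B_i)] + {c_i, c_(i+1)}` is planar. -/
theorem stmt8 {V : Type*} [Fintype V] (G : SimpleGraph V)
    (a b : V) (hconn : G.Reachable a b)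
    (hblk : ¬ ∃ B : Set V, IsBlock G B ∧ a ∈ B ∧ b ∈ B)
    (k : ℕ) (bc : BCPath G a b k) (i : Fin k) :
    (∃ Q : (addEdge G a b).Walk (bc.c i.castSucc) (bc.c i.succ),
       Q.IsPath ∧
       {x : V | x ∈ Q.support} ∩ bc.Bl i.succ.castSucc =
         {bc.c i.castSucc, bc.c i.succ}) ∧
    ((addEdge G a b).IsPlanar →
      (addEdge (inducedOn G (bc.Bl i.succ.castSucc))
        (bc.c i.castSucc) (bc.c i.succ)).IsPlanar) :=
  stmt8_general G a b k bc i
end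

section
/- Let G be a graph, let u and v be distinct vertices, and let e be an edge not in G. Then the maximum number of pairwise internally vertex-disjoint paths from u to v in the graph G + e is at most one more than the maximum number of pairwise internally vertex-disjoint paths from u to v in G. (Consequently, inserting or deleting a single edge changes the maximum number of internally vertex-disjoint paths between any two vertices by at most one.) -/
open SimpleGraph

/-- The graph `G` with the (potential) edge `e` inserted. -/
def addEdgeSym {W : Type*} (G : SimpleGraph W) (e : Sym2 W) : SimpleGraph W :=
  G ⊔ SimpleGraph.fromEdgeSet {e}

/-
An edge shared by two internally disjoint paths has both ends among the common endpoints `u`, `v`,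
so it is the edge `uv`, and a path through `uv` is that single edge. Hence two distinct internally
disjoint paths never share an edge: at most one of the given paths in `G + e` uses `e`, and the
remaining `n` paths already live in `G`.
-/

namespace IntDisjoint

variable {W : Type*} {G : SimpleGraph W} {s t : W} {p q : G.Walk s t}

lemma eq_of_mem_edges (hpq : IntDisjoint G p q) (hp : p.IsPath) (hq : q.IsPath) {f : Sym2 W}
    (hfp : f ∈ p.edges) (hfq : f ∈ q.edges) : p = q := by
  induction f using Sym2.ind with
  | h a b =>
    have hab : a ≠ b := (p.adj_of_mem_edges hfp).ne
    have ha := hpq a (p.fst_mem_support_of_mem_edges hfp) (q.fst_mem_support_of_mem_edges hfq)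
    have hb := hpq b (p.snd_mem_support_of_mem_edges hfp) (q.snd_mem_support_of_mem_edges hfq)
    have hst : s(a, b) = s(s, t) := by
      rcases ha with rfl | rfl <;> rcases hb with rfl | rfl <;> simp_all [Sym2.eq_swap]
    rw [hst] at hfp hfq
    rw [hp.eq_adj_toWalk_of_mem_edges hfp, hq.eq_adj_toWalk_of_mem_edges hfq]

lemma transfer {H : SimpleGraph W} (hpq : IntDisjoint G p q) (hp : ∀ f ∈ p.edges, f ∈ H.edgeSet)
    (hq : ∀ f ∈ q.edges, f ∈ H.edgeSet) : IntDisjoint H (p.transfer H hp) (q.transfer H hq) := by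
  simpa only [IntDisjoint, Walk.support_transfer] using hpq

end IntDisjoint

lemma exists_forall_ne_notMem_edges {W ι : Type*} [Nonempty ι] {G : SimpleGraph W} {s t : W}
    {P : ι → G.Walk s t} (hinj : Function.Injective P) (hpath : ∀ i, (P i).IsPath)
    (hdisj : ∀ i j, i ≠ j → IntDisjoint G (P i) (P j)) (f : Sym2 W) :
    ∃ i₀, ∀ j, j ≠ i₀ → f ∉ (P j).edges := by
  by_cases hused : ∃ i, f ∈ (P i).edges
  · obtain ⟨i₀, hi₀⟩ := hused
    exact ⟨i₀, fun j hj hj₀ =>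
      hj (hinj ((hdisj j i₀ hj).eq_of_mem_edges (hpath j) (hpath i₀) hj₀ hi₀))⟩
  · exact ⟨Classical.arbitrary ι, fun j _ hj => hused ⟨j, hj⟩⟩

lemma SimpleGraph.Walk.edges_subset_edgeSet_of_notMem_edges {W : Type*} {G : SimpleGraph W} {e : Sym2 W}
    {s t : W} {p : (addEdgeSym G e).Walk s t} (he : e ∉ p.edges) :
    ∀ f ∈ p.edges, f ∈ G.edgeSet := by
  intro f hf
  have hf' := p.edges_subset_edgeSet hf
  rw [addEdgeSym, edgeSet_sup, edgeSet_fromEdgeSet] at hf'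
  rcases hf' with hG | ⟨rfl, -⟩
  · exact hG
  · exact absurd hf he

theorem stmt13_general {V : Type*} (G : SimpleGraph V) (u v : V)
    (e : Sym2 V) (n : ℕ)
    (P : Fin (n + 1) → (addEdgeSym G e).Walk u v)
    (hpath : ∀ i, (P i).IsPath)
    (hinj : Function.Injective P)
    (hdisj : ∀ i j, i ≠ j → IntDisjoint (addEdgeSym G e) (P i) (P j)) :
    ∃ Q : Fin n → G.Walk u v,
      (∀ i, (Q i).IsPath) ∧
      Function.Injective Q ∧
      (∀ i j, i ≠ j → IntDisjoint G (Q i) (Q j)) := by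
  obtain ⟨i₀, hi₀⟩ := exists_forall_ne_notMem_edges hinj hpath hdisj e
  have hG (j : Fin n) : ∀ f ∈ (P (i₀.succAbove j)).edges, f ∈ G.edgeSet :=
    (P _).edges_subset_edgeSet_of_notMem_edges (hi₀ _ (Fin.succAbove_ne i₀ j))
  refine ⟨fun j => (P (i₀.succAbove j)).transfer G (hG j), fun j => (hpath _).transfer _,
    fun j k hjk => ?_, fun j k hjk => (hdisj _ _ (Fin.succAbove_right_injective.ne hjk)).transfer _ _⟩
  have hsupp := congrArg Walk.support hjk
  simp only [Walk.support_transfer] at hsupp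
  exact Fin.succAbove_right_injective (hinj (Walk.ext_support hsupp))

/-- Inserting a single edge increases the maximum number of pairwise
internally vertex-disjoint `u`–`v` paths by at most one: any `n + 1` pairwise
internally disjoint `u`–`v` paths in `G + e` yield `n` such paths in `G`. -/
theorem stmt13 {V : Type*} [Fintype V] (G : SimpleGraph V) (u v : V) (huv : u ≠ v)
    (e : Sym2 V) (hdiag : ¬ e.IsDiag) (he : e ∉ G.edgeSet) (n : ℕ)
    (P : Fin (n + 1) → (addEdgeSym G e).Walk u v)
    (hpath : ∀ i, (P i).IsPath)
    (hinj : Function.Injective P)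
    (hdisj : ∀ i j, i ≠ j → IntDisjoint (addEdgeSym G e) (P i) (P j)) :
    ∃ Q : Fin n → G.Walk u v,
      (∀ i, (Q i).IsPath) ∧
      Function.Injective Q ∧
      (∀ i j, i ≠ j → IntDisjoint G (Q i) (Q j)) :=
  stmt13_general G u v e n P hpath hinj hdisj
end
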